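/- Let p₁ = p_{1R} + i p_{1I}, p₂ = p_{2R} + i p_{2I} ∈ ℂ with p_{1R} > 0, p_{2R} > 0, p_{1I} ≠ 0, p_{2I} ≠ 0, |p₁| < |p₂|, p₁ + p₂ ≠ 0, p₁ + conj(p₂) ≠ 0, p₂ + conj(p₁) ≠ 0, and p₁⁻² ≠ conj(p₂)⁻². Let α_j⁽¹⁾, α_j⁽²⁾ ∈ ℂ (j = 1,2) with (α₁⁽¹⁾, α₁⁽²⁾) ≠ (0,0). Define η_j(y,s) = p_j y + s/p_j, P₁₂ = (p₁−p₂)/(p₁+p₂), P_{i j̄} = (p_i − conj(p_j))/(p_i + conj(p_j)), B_{i j̄} = (α_i⁽¹⁾ conj(α_j⁽¹⁾) + α_i⁽²⁾ conj(α_j⁽²⁾))/(4(p_i⁻² − conj(p_j)⁻²)), e^{r_{i j̄}} = (α_i⁽¹⁾ conj(α_j⁽¹⁾) + α_i⁽²⁾ conj(α_j⁽²⁾))/(4(p_i⁻¹ + conj(p_j)⁻¹)²), and the two-soliton tau functions f = 1 + e^{η₁+conj(η₁)+r_{11̄}} + e^{η₁+conj(η₂)+r_{12̄}} + e^{η₂+conj(η₁)+r_{21̄}}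 + e^{η₂+conj(η₂)+r_{22̄}} + |P₁₂|²|P_{12̄}|² P_{11̄} P_{22̄} (B_{11̄}B_{22̄} − B_{21̄}B_{12̄}) e^{η₁+η₂+conj(η₁)+conj(η₂)} and g_i = α₁⁽ⁱ⁾ e^{η₁} + α₂⁽ⁱ⁾ e^{η₂} + P₁₂ P_{11̄} P_{21̄}(α₂⁽ⁱ⁾ B_{11̄} − α₁⁽ⁱ⁾ B_{21̄}) e^{η₁+η₂+conj(η₁)} + P₁₂ P_{12̄} P_{22̄}(α₂⁽ⁱ⁾ B_{12̄} − α₁⁽ⁱ⁾ B_{22̄}) e^{η₁+η₂+conj(η₂)} (i = 1,2). Fix ξ ∈ ℝ and set y(s) = ξ/p_{1R} − s/|p₁|², η_{1I}(s) = p_{1I}(y(s) − s/|p₁|²), and r_{11̄} = log((|α₁⁽¹⁾|² + |α₁⁽²⁾|²)|p₁|⁴/(4(p₁+conj(p₁))²)) ∈ ℝ. Then for i = 1,2, as s → +∞, e^{−i η_{1I}(s)} · g_i(y(s), s)/f(y(s), s) converges to (α₁⁽ⁱ⁾/√(|α₁⁽¹⁾|² + |α₁⁽²⁾|²)) · (2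 p_{1R}/|p₁|²) · sech(ξ + r_{11̄}/2). -/

import Mathlib

/-!
Along the line `y = ξ / p_{1R} - s / |p₁|²` one has `η₁ = ξ + i η_{1I}`, whose real part is fixed,
while `Re η₂ = p_{2R} (ξ / p_{1R} + s (1/|p₂|² - 1/|p₁|²)) → -∞` because `|p₁| < |p₂|`.
So every term of `f` and `gᵢ` involving `η₂` dies out: `e^{-i η_{1I}} gᵢ → α₁⁽ⁱ⁾ e^ξ` and
`f → 1 + κ² e^{2ξ}` with `κ² = e^{r_{11̄}}`, and `e^ξ / (1 + κ² e^{2ξ}) = sech (ξ + log κ) / (2κ)`.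
-/

open Complex Filter

/-- `sech u = 2/(e^u + e^{−u})`. -/
noncomputable def sech (u : ℝ) : ℝ := 2 / (Real.exp u + Real.exp (-u))

open ComplexConjugate Topology

theorem exp_div_one_add_sq_mul_exp_two_mul {κ : ℝ} (hκ : 0 < κ) (ξ : ℝ) :
    Real.exp ξ / (1 + κ ^ 2 * Real.exp (2 * ξ)) = sech (ξ + Real.log κ) / (2 * κ) := by
  have hexp : Real.exp (ξ + Real.log κ) = κ * Real.exp ξ := by
    rw [Real.exp_add, Real.exp_log hκ, mul_comm]
  have h2 : Real.exp (2 * ξ) = Real.exp ξ ^ 2 := by rw [← Real.exp_nat_mul]; norm_num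
  rw [sech, Real.exp_neg, hexp, h2]
  field_simp
  ring

theorem re_mul_ofReal_add_ofReal_div (p : ℂ) (y s : ℝ) :
    (p * y + s / p).re = p.re * (y + s / normSq p) := by
  simp only [add_re, mul_re, div_re, ofReal_re, ofReal_im]; ring

theorem im_mul_ofReal_add_ofReal_div (p : ℂ) (y s : ℝ) :
    (p * y + s / p).im = p.im * (y - s / normSq p) := by
  simp only [add_im, mul_im, div_im, ofReal_re, ofReal_im]; ring

theorem inv_add_inv_conj (p : ℂ) : p⁻¹ + (conj p)⁻¹ = ((2 * p.re / normSq p : ℝ) : ℂ) := by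
  rw [← map_inv₀, add_conj, inv_re]; push_cast; ring

theorem mul_conj_add_mul_conj_div_inv_add_inv_conj_sq (a b p : ℂ) (hp : p.re ≠ 0) :
    (a * conj a + b * conj b) / (4 * (p⁻¹ + (conj p)⁻¹) ^ 2)
      = ((‖a‖ ^ 2 + ‖b‖ ^ 2) * normSq p ^ 2 / (4 * (2 * p.re) ^ 2) : ℝ) := by
  have hp₀ : normSq p ≠ 0 := normSq_eq_zero.not.2 fun h => hp (by simp [h])
  rw [inv_add_inv_conj, mul_conj, mul_conj, normSq_eq_norm_sq, normSq_eq_norm_sq]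
  push_cast
  field_simp

theorem tendsto_re_mul_ofReal_add_ofReal_div_atBot {p q : ℂ} (hp : p ≠ 0) (hq : 0 < q.re)
    (hpq : normSq p < normSq q) (c : ℝ) :
    Tendsto (fun s : ℝ => (q * ↑(c - s / normSq p) + s / q).re) atTop atBot := by
  have hslope : 1 / normSq q - 1 / normSq p < 0 :=
    sub_neg.2 (one_div_lt_one_div_of_lt (normSq_pos.2 hp) hpq)
  have hlin : Tendsto (fun s : ℝ => c + s * (1 / normSq q - 1 / normSq p)) atTop atBot :=
    tendsto_atBot_add_const_left _ c (tendsto_id.atTop_mul_const_of_neg hslope)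
  refine (hlin.const_mul_atBot hq).congr fun s => ?_
  rw [re_mul_ofReal_add_ofReal_div]; ring

section
variable {α : Type*} {l : Filter α}

theorem tendsto_cexp_zero_of_re_eq {v w : α → ℂ} (hv : Tendsto (fun s => (v s).re) l atBot)
    {c k : ℝ} (hk : 0 < k) (hw : ∀ s, (w s).re = c + k * (v s).re) :
    Tendsto (fun s => cexp (w s)) l (𝓝 0) := by
  rw [tendsto_exp_nhds_zero_iff]
  simp only [hw]
  exact tendsto_atBot_add_const_left _ c (hv.const_mul_atBot hk)

variable {u v : α → ℂ} {ξ : ℝ}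

theorem tendsto_cexp_neg_phase_mul_sum {θ : α → ℝ} (hu : ∀ s, u s = ξ + I * θ s)
    (hv : Tendsto (fun s => (v s).re) l atBot) (a b c₁ c₂ : ℂ) :
    Tendsto (fun s => cexp (-(I * θ s)) * (a * cexp (u s) + b * cexp (v s)
        + c₁ * cexp (u s + v s + conj (u s)) + c₂ * cexp (u s + v s + conj (v s))))
      l (𝓝 (a * Real.exp ξ)) := by
  have hre : ∀ s, (u s).re = ξ := fun s => by simp [hu]
  have hphase_re : ∀ s w, (-(I * θ s) + w).re = w.re := fun s w => by simp
  have hb := (tendsto_cexp_zero_of_re_eq hv one_pos (c := 0)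
    (w := fun s => -(I * θ s) + v s) fun s => by rw [hphase_re]; ring).const_mul b
  have hc₁ := (tendsto_cexp_zero_of_re_eq hv one_pos (c := 2 * ξ)
    (w := fun s => -(I * θ s) + (u s + v s + conj (u s)))
    fun s => by rw [hphase_re]; simp only [add_re, conj_re, hre]; ring).const_mul c₁
  have hc₂ := (tendsto_cexp_zero_of_re_eq hv two_pos (c := ξ)
    (w := fun s => -(I * θ s) + (u s + v s + conj (v s)))
    fun s => by rw [hphase_re]; simp only [add_re, conj_re, hre]; ring).const_mul c₂
  have hlim := (tendsto_const_nhds (x := a * Real.exp ξ)).add hb |>.add hc₁ |>.add hc₂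
  simp only [mul_zero, add_zero] at hlim
  refine hlim.congr fun s => ?_
  have hphase : cexp (-(I * θ s)) * cexp (u s) = Real.exp ξ := by
    rw [← Complex.exp_add, hu, ofReal_exp]; ring_nf
  simp only [Complex.exp_add, ← hphase]
  ring

theorem tendsto_one_add_sum_cexp (hu : ∀ s, (u s).re = ξ)
    (hv : Tendsto (fun s => (v s).re) l atBot) (E₁₁ E₁₂ E₂₁ E₂₂ K : ℂ) :
    Tendsto (fun s => 1 + E₁₁ * cexp (u s + conj (u s)) + E₁₂ * cexp (u s + conj (v s))
        + E₂₁ * cexp (v s + conj (u s)) + E₂₂ * cexp (v s + conj (v s))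
        + K * cexp (u s + v s + conj (u s) + conj (v s)))
      l (𝓝 (1 + E₁₁ * Real.exp (2 * ξ))) := by
  have h₁₁ : ∀ s, cexp (u s + conj (u s)) = Real.exp (2 * ξ) := fun s => by
    rw [add_conj, hu, ofReal_exp]
  have h₁₂ := (tendsto_cexp_zero_of_re_eq hv one_pos (c := ξ)
    (w := fun s => u s + conj (v s)) fun s => by simp [hu]).const_mul E₁₂
  have h₂₁ := (tendsto_cexp_zero_of_re_eq hv one_pos (c := ξ)
    (w := fun s => v s + conj (u s))
    fun s => by simp only [add_re, conj_re, hu]; ring).const_mul E₂₁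
  have h₂₂ := (tendsto_cexp_zero_of_re_eq hv two_pos (c := 0)
    (w := fun s => v s + conj (v s)) fun s => by simp only [add_re, conj_re]; ring).const_mul E₂₂
  have hK := (tendsto_cexp_zero_of_re_eq hv two_pos (c := 2 * ξ)
    (w := fun s => u s + v s + conj (u s) + conj (v s))
    fun s => by simp only [add_re, conj_re, hu]; ring).const_mul K
  have hlim := (tendsto_const_nhds (x := 1 + E₁₁ * Real.exp (2 * ξ))).add h₁₂ |>.add h₂₁
    |>.add h₂₂ |>.add hK
  simp only [mul_zero, add_zero] at hlim
  exact hlim.congr fun s => by rw [h₁₁]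

theorem tendsto_cexp_neg_phase_mul_div {θ : α → ℝ} {κ : ℝ} (hκ : 0 < κ)
    (hu : ∀ s, u s = ξ + I * θ s) (hv : Tendsto (fun s => (v s).re) l atBot)
    {g f : α → ℂ} {a b c₁ c₂ E₁₁ E₁₂ E₂₁ E₂₂ K : ℂ} (hE₁₁ : E₁₁ = ↑(κ ^ 2))
    (hg : ∀ s, g s = a * cexp (u s) + b * cexp (v s)
        + c₁ * cexp (u s + v s + conj (u s)) + c₂ * cexp (u s + v s + conj (v s)))
    (hf : ∀ s, f s = 1 + E₁₁ * cexp (u s + conj (u s)) + E₁₂ * cexp (u s + conj (v s))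
        + E₂₁ * cexp (v s + conj (u s)) + E₂₂ * cexp (v s + conj (v s))
        + K * cexp (u s + v s + conj (u s) + conj (v s))) :
    Tendsto (fun s => cexp (-(I * θ s)) * (g s / f s)) l
      (𝓝 (a * ↑(sech (ξ + Real.log κ) / (2 * κ)))) := by
  have hF := tendsto_one_add_sum_cexp (fun s => by simp [hu] : ∀ s, (u s).re = ξ) hv
    E₁₁ E₁₂ E₂₁ E₂₂ K
  have hF₀ : 1 + E₁₁ * Real.exp (2 * ξ) = ((1 + κ ^ 2 * Real.exp (2 * ξ) : ℝ) : ℂ) := by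
    push_cast [hE₁₁]; rfl
  rw [hF₀] at hF
  have hlim := (tendsto_cexp_neg_phase_mul_sum hu hv a b c₁ c₂).div hF
    (ofReal_ne_zero.2 (by positivity))
  rw [← exp_div_one_add_sq_mul_exp_two_mul hκ, ofReal_div, ← mul_div_assoc]
  exact hlim.congr fun s => by rw [hg, hf, Pi.div_apply, mul_div_assoc]

end

theorem ccsp_two_soliton_asymptotics_general
    (p1R p1I p2R p2I : ℝ) (hp1R : 0 < p1R) (hp2R : 0 < p2R)
    (p₁ p₂ : ℂ) (hp₁ : p₁ = ⟨p1R, p1I⟩) (hp₂ : p₂ = ⟨p2R, p2I⟩)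
    (habs : ‖p₁‖ < ‖p₂‖)
    (α₁c₁ α₁c₂ α₂c₁ α₂c₂ : ℂ) (hα₁ : ¬(α₁c₁ = 0 ∧ α₁c₂ = 0))
    (η₁ η₂ : ℝ → ℝ → ℂ)
    (hη₁ : ∀ y s, η₁ y s = p₁ * (y : ℂ) + (s : ℂ) / p₁)
    (hη₂ : ∀ y s, η₂ y s = p₂ * (y : ℂ) + (s : ℂ) / p₂)
    (P12 P11b P12b P21b P22b : ℂ)
    (B11b B12b B21b B22b : ℂ)
    (E11 E12 E21 E22 : ℂ)
    (hE11 : E11 = (α₁c₁ * starRingEnd ℂ α₁c₁ + α₁c₂ * starRingEnd ℂ α₁c₂)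
      / (4 * (p₁⁻¹ + (starRingEnd ℂ p₁)⁻¹)^2))
    (f g₁ g₂ : ℝ → ℝ → ℂ)
    (hf : ∀ y s, f y s = 1
      + E11 * Complex.exp (η₁ y s + starRingEnd ℂ (η₁ y s))
      + E12 * Complex.exp (η₁ y s + starRingEnd ℂ (η₂ y s))
      + E21 * Complex.exp (η₂ y s + starRingEnd ℂ (η₁ y s))
      + E22 * Complex.exp (η₂ y s + starRingEnd ℂ (η₂ y s))
      + (‖P12‖ : ℂ)^2 * (‖P12b‖ : ℂ)^2 * P11b * P22b
          * (B11b * B22b - B21b * B12b)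
          * Complex.exp (η₁ y s + η₂ y s + starRingEnd ℂ (η₁ y s) + starRingEnd ℂ (η₂ y s)))
    (hg₁ : ∀ y s, g₁ y s = α₁c₁ * Complex.exp (η₁ y s) + α₂c₁ * Complex.exp (η₂ y s)
      + P12 * P11b * P21b * (α₂c₁ * B11b - α₁c₁ * B21b)
          * Complex.exp (η₁ y s + η₂ y s + starRingEnd ℂ (η₁ y s))
      + P12 * P12b * P22b * (α₂c₁ * B12b - α₁c₁ * B22b)
          * Complex.exp (η₁ y s + η₂ y s + starRingEnd ℂ (η₂ y s)))
    (hg₂ : ∀ y s, g₂ y s = α₁c₂ * Complex.exp (η₁ y s) + α₂c₂ * Complex.exp (η₂ y s)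
      + P12 * P11b * P21b * (α₂c₂ * B11b - α₁c₂ * B21b)
          * Complex.exp (η₁ y s + η₂ y s + starRingEnd ℂ (η₁ y s))
      + P12 * P12b * P22b * (α₂c₂ * B12b - α₁c₂ * B22b)
          * Complex.exp (η₁ y s + η₂ y s + starRingEnd ℂ (η₂ y s)))
    (ξ : ℝ)
    (yline : ℝ → ℝ) (hyline : ∀ s, yline s = ξ / p1R - s / (p1R^2 + p1I^2))
    (η1I : ℝ → ℝ) (hη1I : ∀ s, η1I s = p1I * (yline s - s / (p1R^2 + p1I^2)))
    (r11 : ℝ)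
    (hr11 : r11 = Real.log (((‖α₁c₁‖)^2 + (‖α₁c₂‖)^2)
      * (p1R^2 + p1I^2)^2 / (4 * (2 * p1R)^2))) :
    Tendsto (fun s => Complex.exp (-(Complex.I * (η1I s : ℂ)))
        * (g₁ (yline s) s / f (yline s) s)) atTop
      (nhds ((α₁c₁ / ((Real.sqrt ((‖α₁c₁‖)^2 + (‖α₁c₂‖)^2) : ℝ) : ℂ))
        * ((2 * p1R / (p1R^2 + p1I^2) : ℝ) : ℂ)
        * ((sech (ξ + r11 / 2) : ℝ) : ℂ)))
    ∧
    Tendsto (fun s => Complex.exp (-(Complex.I * (η1I s : ℂ)))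
        * (g₂ (yline s) s / f (yline s) s)) atTop
      (nhds ((α₁c₂ / ((Real.sqrt ((‖α₁c₁‖)^2 + (‖α₁c₂‖)^2) : ℝ) : ℂ))
        * ((2 * p1R / (p1R^2 + p1I^2) : ℝ) : ℂ)
        * ((sech (ξ + r11 / 2) : ℝ) : ℂ))) := by
  have hre₁ : p₁.re = p1R := by rw [hp₁]
  have hnormSq₁ : normSq p₁ = p1R ^ 2 + p1I ^ 2 := by rw [hp₁, normSq_mk]; ring
  have hnormSq_lt : normSq p₁ < normSq p₂ := by
    rw [normSq_eq_norm_sq, normSq_eq_norm_sq]; gcongr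
  have hA : 0 < ‖α₁c₁‖ ^ 2 + ‖α₁c₂‖ ^ 2 := by
    rcases not_and_or.1 hα₁ with h | h <;> positivity
  set A := ‖α₁c₁‖ ^ 2 + ‖α₁c₂‖ ^ 2
  set D := p1R ^ 2 + p1I ^ 2
  set κ := √A * D / (4 * p1R) with hκ_def
  have hκ : 0 < κ := by positivity
  have hκ_sq : κ ^ 2 = A * D ^ 2 / (4 * (2 * p1R) ^ 2) := by
    rw [hκ_def, div_pow, mul_pow, Real.sq_sqrt hA.le]; ring
  have hE : E11 = ↑(κ ^ 2) := by
    rw [hE11, mul_conj_add_mul_conj_div_inv_add_inv_conj_sq _ _ _ (hre₁ ▸ hp1R.ne'), hre₁,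
      hnormSq₁, hκ_sq]
  have hline₁ : ∀ s, η₁ (yline s) s = ξ + I * η1I s := fun s => by
    rw [hη₁]
    apply Complex.ext
    · rw [re_mul_ofReal_add_ofReal_div, hre₁, hnormSq₁, hyline, sub_add_cancel,
        mul_div_cancel₀ _ hp1R.ne']
      simp
    · rw [im_mul_ofReal_add_ofReal_div, hnormSq₁, hη1I]; simp [hp₁]
  have hline₂ : Tendsto (fun s => (η₂ (yline s) s).re) atTop atBot :=
    (tendsto_re_mul_ofReal_add_ofReal_div_atBot (ne_zero_of_re_pos (hre₁ ▸ hp1R))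
      (by rwa [hp₂]) hnormSq_lt (ξ / p1R)).congr fun s => by rw [hη₂, hyline, hnormSq₁]
  have hlim : ∀ a : ℂ, a * ↑(sech (ξ + Real.log κ) / (2 * κ))
      = a / ↑√A * ↑(2 * p1R / D) * ↑(sech (ξ + r11 / 2)) := fun a => by
    rw [hr11, ← hκ_sq, Real.log_pow, hκ_def]; push_cast; field_simp; ring_nf
  constructor <;> rw [← hlim]
  · exact tendsto_cexp_neg_phase_mul_div hκ hline₁ hline₂ hE (fun s => hg₁ _ _) fun s => hf _ _
  · exact tendsto_cexp_neg_phase_mul_div hκ hline₁ hline₂ hE (fun s => hg₂ _ _) fun s => hf _ _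

/-- Asymptotic form of soliton 1 of the CCSP two-soliton solution before the collision:
along the line `η_{1R} = ξ`, as `s → +∞` (i.e. `t → −∞`), `e^{−i η_{1I}} g_i/f`
converges to `(α₁⁽ⁱ⁾/√(|α₁⁽¹⁾|²+|α₁⁽²⁾|²)) (2p_{1R}/|p₁|²) sech(ξ + r_{11̄}/2)`. -/
theorem ccsp_two_soliton_asymptotics
    (p1R p1I p2R p2I : ℝ) (hp1R : 0 < p1R) (hp2R : 0 < p2R)
    (hp1I : p1I ≠ 0) (hp2I : p2I ≠ 0)
    (p₁ p₂ : ℂ) (hp₁ : p₁ = ⟨p1R, p1I⟩) (hp₂ : p₂ = ⟨p2R, p2I⟩)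
    (habs : ‖p₁‖ < ‖p₂‖)
    (hsum : p₁ + p₂ ≠ 0) (hsum₁ : p₁ + starRingEnd ℂ p₂ ≠ 0)
    (hsum₂ : p₂ + starRingEnd ℂ p₁ ≠ 0)
    (hinv : (p₁⁻¹)^2 ≠ ((starRingEnd ℂ p₂)⁻¹)^2)
    (α₁c₁ α₁c₂ α₂c₁ α₂c₂ : ℂ) (hα₁ : ¬(α₁c₁ = 0 ∧ α₁c₂ = 0))
    (η₁ η₂ : ℝ → ℝ → ℂ)
    (hη₁ : ∀ y s, η₁ y s = p₁ * (y : ℂ) + (s : ℂ) / p₁)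
    (hη₂ : ∀ y s, η₂ y s = p₂ * (y : ℂ) + (s : ℂ) / p₂)
    (P12 P11b P12b P21b P22b : ℂ)
    (hP12 : P12 = (p₁ - p₂) / (p₁ + p₂))
    (hP11b : P11b = (p₁ - starRingEnd ℂ p₁) / (p₁ + starRingEnd ℂ p₁))
    (hP12b : P12b = (p₁ - starRingEnd ℂ p₂) / (p₁ + starRingEnd ℂ p₂))
    (hP21b : P21b = (p₂ - starRingEnd ℂ p₁) / (p₂ + starRingEnd ℂ p₁))
    (hP22b : P22b = (p₂ - starRingEnd ℂ p₂) / (p₂ + starRingEnd ℂ p₂))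
    (B11b B12b B21b B22b : ℂ)
    (hB11b : B11b = (α₁c₁ * starRingEnd ℂ α₁c₁ + α₁c₂ * starRingEnd ℂ α₁c₂)
      / (4 * ((p₁⁻¹)^2 - ((starRingEnd ℂ p₁)⁻¹)^2)))
    (hB12b : B12b = (α₁c₁ * starRingEnd ℂ α₂c₁ + α₁c₂ * starRingEnd ℂ α₂c₂)
      / (4 * ((p₁⁻¹)^2 - ((starRingEnd ℂ p₂)⁻¹)^2)))
    (hB21b : B21b = (α₂c₁ * starRingEnd ℂ α₁c₁ + α₂c₂ * starRingEnd ℂ α₁c₂)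
      / (4 * ((p₂⁻¹)^2 - ((starRingEnd ℂ p₁)⁻¹)^2)))
    (hB22b : B22b = (α₂c₁ * starRingEnd ℂ α₂c₁ + α₂c₂ * starRingEnd ℂ α₂c₂)
      / (4 * ((p₂⁻¹)^2 - ((starRingEnd ℂ p₂)⁻¹)^2)))
    (E11 E12 E21 E22 : ℂ)
    (hE11 : E11 = (α₁c₁ * starRingEnd ℂ α₁c₁ + α₁c₂ * starRingEnd ℂ α₁c₂)
      / (4 * (p₁⁻¹ + (starRingEnd ℂ p₁)⁻¹)^2))
    (hE12 : E12 = (α₁c₁ * starRingEnd ℂ α₂c₁ + α₁c₂ * starRingEnd ℂ α₂c₂)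
      / (4 * (p₁⁻¹ + (starRingEnd ℂ p₂)⁻¹)^2))
    (hE21 : E21 = (α₂c₁ * starRingEnd ℂ α₁c₁ + α₂c₂ * starRingEnd ℂ α₁c₂)
      / (4 * (p₂⁻¹ + (starRingEnd ℂ p₁)⁻¹)^2))
    (hE22 : E22 = (α₂c₁ * starRingEnd ℂ α₂c₁ + α₂c₂ * starRingEnd ℂ α₂c₂)
      / (4 * (p₂⁻¹ + (starRingEnd ℂ p₂)⁻¹)^2))
    (f g₁ g₂ : ℝ → ℝ → ℂ)
    (hf : ∀ y s, f y s = 1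
      + E11 * Complex.exp (η₁ y s + starRingEnd ℂ (η₁ y s))
      + E12 * Complex.exp (η₁ y s + starRingEnd ℂ (η₂ y s))
      + E21 * Complex.exp (η₂ y s + starRingEnd ℂ (η₁ y s))
      + E22 * Complex.exp (η₂ y s + starRingEnd ℂ (η₂ y s))
      + (‖P12‖ : ℂ)^2 * (‖P12b‖ : ℂ)^2 * P11b * P22b
          * (B11b * B22b - B21b * B12b)
          * Complex.exp (η₁ y s + η₂ y s + starRingEnd ℂ (η₁ y s) + starRingEnd ℂ (η₂ y s)))
    (hg₁ : ∀ y s, g₁ y s = α₁c₁ * Complex.exp (η₁ y s) + α₂c₁ * Complex.exp (η₂ y s)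
      + P12 * P11b * P21b * (α₂c₁ * B11b - α₁c₁ * B21b)
          * Complex.exp (η₁ y s + η₂ y s + starRingEnd ℂ (η₁ y s))
      + P12 * P12b * P22b * (α₂c₁ * B12b - α₁c₁ * B22b)
          * Complex.exp (η₁ y s + η₂ y s + starRingEnd ℂ (η₂ y s)))
    (hg₂ : ∀ y s, g₂ y s = α₁c₂ * Complex.exp (η₁ y s) + α₂c₂ * Complex.exp (η₂ y s)
      + P12 * P11b * P21b * (α₂c₂ * B11b - α₁c₂ * B21b)
          * Complex.exp (η₁ y s + η₂ y s + starRingEnd ℂ (η₁ y s))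
      + P12 * P12b * P22b * (α₂c₂ * B12b - α₁c₂ * B22b)
          * Complex.exp (η₁ y s + η₂ y s + starRingEnd ℂ (η₂ y s)))
    (ξ : ℝ)
    (yline : ℝ → ℝ) (hyline : ∀ s, yline s = ξ / p1R - s / (p1R^2 + p1I^2))
    (η1I : ℝ → ℝ) (hη1I : ∀ s, η1I s = p1I * (yline s - s / (p1R^2 + p1I^2)))
    (r11 : ℝ)
    (hr11 : r11 = Real.log (((‖α₁c₁‖)^2 + (‖α₁c₂‖)^2)
      * (p1R^2 + p1I^2)^2 / (4 * (2 * p1R)^2))) :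
    Tendsto (fun s => Complex.exp (-(Complex.I * (η1I s : ℂ)))
        * (g₁ (yline s) s / f (yline s) s)) atTop
      (nhds ((α₁c₁ / ((Real.sqrt ((‖α₁c₁‖)^2 + (‖α₁c₂‖)^2) : ℝ) : ℂ))
        * ((2 * p1R / (p1R^2 + p1I^2) : ℝ) : ℂ)
        * ((sech (ξ + r11 / 2) : ℝ) : ℂ)))
    ∧
    Tendsto (fun s => Complex.exp (-(Complex.I * (η1I s : ℂ)))
        * (g₂ (yline s) s / f (yline s) s)) atTop
      (nhds ((α₁c₂ / ((Real.sqrt ((‖α₁c₁‖)^2 + (‖α₁c₂‖)^2) : ℝ) : ℂ))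
        * ((2 * p1R / (p1R^2 + p1I^2) : ℝ) : ℂ)
        * ((sech (ξ + r11 / 2) : ℝ) : ℂ))) :=
  ccsp_two_soliton_asymptotics_general p1R p1I p2R p2I hp1R hp2R p₁ p₂ hp₁ hp₂ habs α₁c₁ α₁c₂ α₂c₁
    α₂c₂ hα₁ η₁ η₂ hη₁ hη₂ P12 P11b P12b P21b P22b B11b B12b B21b B22b E11 E12 E21 E22 hE11 f g₁ g₂
    hf hg₁ hg₂ ξ yline hyline η1I hη1I r11 hr11
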